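/- Let 𝓛 be an even mixed form of codegree k and additional degree r on an open set U ⊆ ℝⁿ, and let Δ𝓛 be its differential, Δ𝓛(x, p, ŵ) := (−1)^r Σ_{K=1}^{k} Σ_{A=1}^{n} w'^K (∂²𝓛/∂x^A∂p_A^K)(x, p, w), where ŵ ∈ Matrix((r+1)×k, ℝ) has first r rows w and last row w'. Then Δ𝓛 is left-covariant: Δ𝓛(x, p, ĥ·ŵ) = det ĥ · Δ𝓛(x, p, ŵ) for all x, p, ŵ and all invertible ĥ ∈ Matrix((r+1)×(r+1), ℝ). -/

import Mathlib

open MeasureTheory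
open scoped BigOperators

noncomputable section

/-- Product of matrices given as functions (entry `(i,k)` is `∑ j, M i j * N j k`). -/
def mmul {a b c : ℕ} (M : Fin a → Fin b → ℝ) (N : Fin b → Fin c → ℝ) :
    Fin a → Fin c → ℝ :=
  fun i k => ∑ j, M i j * N j k

/-- Determinant of a square matrix given as a function. -/
def fdet {a : ℕ} (M : Fin a → Fin a → ℝ) : ℝ :=
  Matrix.det (Matrix.of M)

/-- Partial derivative of a function of a matrix with respect to the `(i,j)` entry. -/
def pdM {a b : ℕ} (L : (Fin a → Fin b → ℝ) → ℝ) (i : Fin a) (j : Fin b)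
    (m : Fin a → Fin b → ℝ) : ℝ :=
  deriv (fun t : ℝ => L (fun i' j' => m i' j' + (if i' = i ∧ j' = j then t else 0))) 0

/-- Partial derivative of a function of a vector with respect to the `i`-th coordinate. -/
def pdV {a : ℕ} (f : (Fin a → ℝ) → ℝ) (i : Fin a) (x : Fin a → ℝ) : ℝ :=
  deriv (fun t : ℝ => f (fun i' => x i' + (if i' = i then t else 0))) 0

/-- The fundamental equations for a function of an `a × b` matrix:
for all rows `i₁, i₂` and columns `j₁, j₂`,
`∂²L/∂m_{i₁}^{j₁}∂m_{i₂}^{j₂} + ∂²L/∂m_{i₂}^{j₁}∂m_{i₁}^{j₂} = 0`. -/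
def FundEqs {a b : ℕ} (L : (Fin a → Fin b → ℝ) → ℝ) : Prop :=
  ∀ (i₁ i₂ : Fin a) (j₁ j₂ : Fin b) (m : Fin a → Fin b → ℝ),
    pdM (fun m' => pdM L i₂ j₂ m') i₁ j₁ m + pdM (fun m' => pdM L i₁ j₂ m') i₂ j₁ m = 0

/-- The velocity matrix of a path `γ`: `(vel γ t) F A = ∂γ^A/∂t^F (t)`. -/
def vel {r n : ℕ} (γ : (Fin r → ℝ) → (Fin n → ℝ)) (t : Fin r → ℝ) :
    Fin r → Fin n → ℝ :=
  fun F A => pdV (fun s => γ s A) F t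

/-- The matrix of gradients of a copath `f`: `(grad f x) A K = ∂f^K/∂x^A (x)`. -/
def grad {n k : ℕ} (f : (Fin n → ℝ) → (Fin k → ℝ)) (x : Fin n → ℝ) :
    Fin n → Fin k → ℝ :=
  fun A K => pdV (fun y => f y K) A x

/-- An even `r`-form on an open set `U ⊆ ℝⁿ`: a smooth function `L(x, ẋ)` of a point
`x` and an `r × n` matrix `ẋ` which is covariant (`L(x, h·ẋ) = det h · L(x, ẋ)` for
invertible `h`) and satisfies the fundamental equations in the entries of `ẋ`. -/
def IsEvenForm {n r : ℕ} (U : Set (Fin n → ℝ))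
    (L : (Fin n → ℝ) → (Fin r → Fin n → ℝ) → ℝ) : Prop :=
  ContDiffOn ℝ (⊤ : ℕ∞)
      (fun q : (Fin n → ℝ) × (Fin r → Fin n → ℝ) => L q.1 q.2)
      (U ×ˢ (Set.univ : Set (Fin r → Fin n → ℝ))) ∧
  (∀ x ∈ U, ∀ (xdot : Fin r → Fin n → ℝ) (h : Fin r → Fin r → ℝ), fdet h ≠ 0 →
    L x (mmul h xdot) = fdet h * L x xdot) ∧
  (∀ x ∈ U, FundEqs (L x))

/-- The differential of a Lagrangian of paths `L(x, ẋ)`: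
`ΔL(x, (ẋ; ẏ)) = (−1)^r Σ_A ẏ^A (∂L/∂x^A − Σ_{F,B} ẋ_F^B ∂²L/∂x^B∂ẋ_F^A)`,
where `ẋ` consists of the first `r` rows and `ẏ` is the last row of the argument. -/
def Dform {n r : ℕ} (L : (Fin n → ℝ) → (Fin r → Fin n → ℝ) → ℝ) :
    (Fin n → ℝ) → (Fin (r + 1) → Fin n → ℝ) → ℝ :=
  fun x M => (-1 : ℝ) ^ r * ∑ A, M (Fin.last r) A *
    (pdV (fun x' => L x' (fun F => M (Fin.castSucc F))) A x
      - ∑ F, ∑ B, M (Fin.castSucc F) B *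
          pdV (fun x' => pdM (L x') F A (fun G => M (Fin.castSucc G))) B x)

/-- An even mixed form of codegree `k` and additional degree `r` on an open set
`U ⊆ ℝⁿ`: a smooth function `𝓛(x, p, w)` which is right-covariant, left-covariant,
admissible, and satisfies the fundamental equations in the entries of the stacked
`(n+r) × k` matrix (`p` over `w`). -/
def IsMixedForm {n k r : ℕ} (U : Set (Fin n → ℝ))
    (L : (Fin n → ℝ) → (Fin n → Fin k → ℝ) → (Fin r → Fin k → ℝ) → ℝ) : Prop :=
  ContDiffOn ℝ (⊤ : ℕ∞)
      (fun q : (Fin n → ℝ) × (Fin n → Fin k → ℝ) × (Fin r → Fin k → ℝ) =>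
        L q.1 q.2.1 q.2.2)
      (U ×ˢ (Set.univ : Set ((Fin n → Fin k → ℝ) × (Fin r → Fin k → ℝ)))) ∧
  (∀ x ∈ U, ∀ (p : Fin n → Fin k → ℝ) (w : Fin r → Fin k → ℝ) (g : Fin k → Fin k → ℝ),
    fdet g ≠ 0 → L x (mmul p g) (mmul w g) = fdet g * L x p w) ∧
  (∀ x ∈ U, ∀ (p : Fin n → Fin k → ℝ) (w : Fin r → Fin k → ℝ) (h : Fin r → Fin r → ℝ),
    fdet h ≠ 0 → L x p (mmul h w) = fdet h * L x p w) ∧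
  (∀ x ∈ U, ∀ (p : Fin n → Fin k → ℝ) (w : Fin r → Fin k → ℝ) (a : Fin n → Fin r → ℝ),
    L x (p + mmul a w) w = L x p w) ∧
  (∀ x ∈ U, FundEqs (fun m : Fin (n + r) → Fin k → ℝ =>
    L x (fun A => m (Fin.castAdd r A)) (fun F => m (Fin.natAdd n F))))

/-- The differential of a mixed Lagrangian `𝓛(x, p, w)`:
`Δ𝓛(x, p, ŵ) = (−1)^r Σ_{K,A} w'^K ∂²𝓛/∂x^A∂p_A^K (x, p, w)`, where `ŵ` has first
`r` rows `w` and last row `w'`. -/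
def Dmix {n k r : ℕ}
    (L : (Fin n → ℝ) → (Fin n → Fin k → ℝ) → (Fin r → Fin k → ℝ) → ℝ) :
    (Fin n → ℝ) → (Fin n → Fin k → ℝ) → (Fin (r + 1) → Fin k → ℝ) → ℝ :=
  fun x p what => (-1 : ℝ) ^ r * ∑ K, ∑ A, what (Fin.last r) K *
    pdV (fun x' => pdM (fun p' => L x' p' (fun F => what (Fin.castSucc F))) A K p) A x

/-- An even dual form of codegree `k` on an open set `U ⊆ ℝⁿ`: a smooth function
`𝓛(x, p)` of a point `x` and an `n × k` matrix `p` of momenta which is covariant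
(`𝓛(x, p·g) = det g · 𝓛(x, p)` for invertible `g`) and satisfies the fundamental
equations in the entries of `p`. -/
def IsDualForm {n k : ℕ} (U : Set (Fin n → ℝ))
    (L : (Fin n → ℝ) → (Fin n → Fin k → ℝ) → ℝ) : Prop :=
  ContDiffOn ℝ (⊤ : ℕ∞)
      (fun q : (Fin n → ℝ) × (Fin n → Fin k → ℝ) => L q.1 q.2)
      (U ×ˢ (Set.univ : Set (Fin n → Fin k → ℝ))) ∧
  (∀ x ∈ U, ∀ (p : Fin n → Fin k → ℝ) (g : Fin k → Fin k → ℝ), fdet g ≠ 0 →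
    L x (mmul p g) = fdet g * L x p) ∧
  (∀ x ∈ U, FundEqs (L x))

/-- The identity matrix as a function. -/
def idm (n : ℕ) : Fin n → Fin n → ℝ := fun i j => if i = j then 1 else 0

/-!
Write `Δ𝓛(x, p, ŵ) = (-1)^r S_w(w')`, where `S_w(v) = Σ_A ∂_{x^A} ∂_{p_A·v} 𝓛(x, p, w)` is linear
in `v`. Since diagonal matrices and transvections generate `GL(r+1)`, it suffices to see how
`ŵ ↦ S_w(w')` changes under them. Rescalings and transvections among the rows of `w` are handled
by the left-covariance of `𝓛`, differentiated in `x` and `p`. Adding a multiple of a row `w_F` to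
`w'` changes nothing since `S_w(w_F) = 0` by admissibility. Adding a multiple of `w'` to `w_F`
changes nothing either: the derivative of `S_w(w')` in that direction is
`Σ_A ∂_{x^A} ∂_{p_A·w'} ∂_{w_F·w'} 𝓛`, and `∂_{p_A·v} ∂_{w_F·v} 𝓛 = 0` identically by the
fundamental equations, polarised in the column index.
-/

open Filter Topology

section Calculus

variable {E E' F : Type*} [NormedAddCommGroup E] [NormedSpace ℝ E]
  [NormedAddCommGroup E'] [NormedSpace ℝ E'] [NormedAddCommGroup F] [NormedSpace ℝ F]

theorem lineDeriv_comp_const_add_clm {f : E → F} (c : E) (σ : E' →L[ℝ] E) {m : E'}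
    (hf : DifferentiableAt ℝ f (c + σ m)) (d : E') :
    lineDeriv ℝ (fun m' => f (c + σ m')) m d = fderiv ℝ f (c + σ m) (σ d) :=
  ((hf.hasFDerivAt.comp m (σ.hasFDerivAt.const_add c)).hasLineDerivAt d).lineDeriv

theorem lineDeriv_const_mul (f : E → ℝ) (x v : E) (a : ℝ) :
    lineDeriv ℝ (fun y => a * f y) x v = a * lineDeriv ℝ f x v :=
  congrFun (deriv_const_mul_field' a) 0

theorem lineDeriv_eq_zero_of_eventuallyEq_zero {f : E → F} {x : E} (hf : f =ᶠ[𝓝 x] 0)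
    (v : E) : lineDeriv ℝ f x v = 0 := by
  rw [hf.lineDeriv_eq]
  simp [lineDeriv]

theorem fderiv_fderiv_apply {f : E → F} {z : E} (hf : DifferentiableAt ℝ (fderiv ℝ f) z)
    (u v : E) : fderiv ℝ (fun z' => fderiv ℝ f z' u) z v = fderiv ℝ (fderiv ℝ f) z v u := by
  rw [fderiv_clm_apply hf (differentiableAt_const u)]
  simp

theorem fderiv_fderiv_apply_eq_zero_of_eventually {f : E → F} {z : E} (hf : ContDiffAt ℝ 2 f z)
    {u : E} (hu : (fun z' => fderiv ℝ f z' u) =ᶠ[𝓝 z] 0) (v : E) :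
    fderiv ℝ (fun z' => fderiv ℝ f z' v) z u = 0 := by
  have hd : DifferentiableAt ℝ (fderiv ℝ f) z :=
    (hf.fderiv_right (m := 1) le_rfl).differentiableAt one_ne_zero
  rw [fderiv_fderiv_apply hd, hf.isSymmSndFDerivAt (by simp) u v, ← fderiv_fderiv_apply hd,
    hu.fderiv_eq]
  simp

theorem apply_add_smul_eq_of_fderiv_apply_eq_zero {f : E → F} {z u : E}
    (hf : ∀ t : ℝ, DifferentiableAt ℝ f (z + t • u))
    (h0 : ∀ t : ℝ, fderiv ℝ f (z + t • u) u = 0) (c : ℝ) : f (z + c • u) = f z := by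
  have hderiv : ∀ t : ℝ, HasDerivAt (fun s : ℝ => f (z + s • u)) 0 t := by
    intro t
    have hline : HasDerivAt (fun s : ℝ => z + s • u) u t := by
      simpa using ((hasDerivAt_id t).smul_const u).const_add z
    simpa [Function.comp_def, h0 t] using (hf t).hasFDerivAt.comp_hasDerivAt t hline
  simpa using is_const_of_deriv_eq_zero (fun t => (hderiv t).differentiableAt)
    (fun t => (hderiv t).deriv) c 0

end Calculus

section LastRow

open Matrix

variable {K ι : Type*} [Field K] {r : ℕ}

theorem transvection_mul_eq_updateRow {n R : Type*} [Fintype n] [DecidableEq n] [CommRing R]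
    (i j : n) (c : R) (M : Matrix n ι R) :
    transvection i j c * M = M.updateRow i (M i + c • M j) := by
  ext a b
  rcases eq_or_ne a i with rfl | ha
  · simp
  · simp [ha]

theorem submatrix_castSucc_updateRow_castSucc {α : Type*} {n : ℕ} (M : Matrix (Fin (n + 1)) ι α)
    (i : Fin n) (b : ι → α) :
    (M.updateRow i.castSucc b).submatrix Fin.castSucc id
      = (M.submatrix Fin.castSucc id).updateRow i b := by
  ext a c
  rcases eq_or_ne a i with rfl | ha
  · simp
  · simp [ha]

theorem submatrix_castSucc_updateRow_last {α : Type*} {n : ℕ} (M : Matrix (Fin (n + 1)) ι α)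
    (b : ι → α) :
    (M.updateRow (Fin.last n) b).submatrix Fin.castSucc id = M.submatrix Fin.castSucc id := by
  ext a c
  simp

def lastRowForm (S : Matrix (Fin r) ι K → (ι → K) → K) (ŵ : Matrix (Fin (r + 1)) ι K) : K :=
  S (ŵ.submatrix Fin.castSucc id) (ŵ (Fin.last r))

variable (S : Matrix (Fin r) ι K → (ι → K) → K) (hlin : ∀ w, IsLinearMap K (S w))
  (hcov : ∀ (h : Matrix (Fin r) (Fin r) K) w v, h.det ≠ 0 → S (h * w) v = h.det * S w v)
  (hrow : ∀ w F, S w (w F) = 0)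
  (hshift : ∀ w F v (c : K), S (w.updateRow F (w F + c • v)) v = S w v)

include hlin hcov

theorem lastRowForm_diagonal_mul (D : Fin (r + 1) → K) (hD : (diagonal D).det ≠ 0)
    (ŵ : Matrix (Fin (r + 1)) ι K) :
    lastRowForm S (diagonal D * ŵ) = (diagonal D).det * lastRowForm S ŵ := by
  rw [det_diagonal, Fin.prod_univ_castSucc] at hD ⊢
  have hinit : (diagonal D * ŵ).submatrix Fin.castSucc id
      = diagonal (D ∘ Fin.castSucc) * ŵ.submatrix Fin.castSucc id := by
    ext; simp
  have hlast : (diagonal D * ŵ) (Fin.last r) = D (Fin.last r) • ŵ (Fin.last r) := by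
    ext; simp
  have hdet : (diagonal (D ∘ Fin.castSucc)).det = ∏ i : Fin r, D i.castSucc := det_diagonal
  rw [lastRowForm, lastRowForm, hinit, hlast, (hlin _).map_smul,
    hcov _ _ _ (hdet ▸ left_ne_zero_of_mul hD), hdet, smul_eq_mul]
  ring

include hrow hshift

theorem lastRowForm_transvection_mul (t : TransvectionStruct (Fin (r + 1)) K)
    (ŵ : Matrix (Fin (r + 1)) ι K) :
    lastRowForm S (t.toMatrix * ŵ) = t.toMatrix.det * lastRowForm S ŵ := by
  obtain ⟨i, j, hij, c⟩ := t
  simp only [TransvectionStruct.toMatrix, det_transvection_of_ne _ _ hij, one_mul,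
    transvection_mul_eq_updateRow, lastRowForm]
  have hinit : ∀ j : Fin r, ŵ j.castSucc = ŵ.submatrix Fin.castSucc id j := fun _ => rfl
  rcases Fin.eq_castSucc_or_eq_last i with ⟨i, rfl⟩ | rfl
  · rw [submatrix_castSucc_updateRow_castSucc, updateRow_ne (Fin.castSucc_ne_last i).symm]
    rcases Fin.eq_castSucc_or_eq_last j with ⟨j, rfl⟩ | rfl
    · have hij' : i ≠ j := fun h => hij (congrArg _ h)
      rw [hinit i, hinit j, ← transvection_mul_eq_updateRow, hcov _ _ _ (by simp [hij']),
        det_transvection_of_ne _ _ hij', one_mul]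
    · exact hshift _ _ _ _
  · rcases Fin.eq_castSucc_or_eq_last j with ⟨j, rfl⟩ | rfl
    · rw [submatrix_castSucc_updateRow_last, updateRow_self, (hlin _).map_add,
        (hlin _).map_smul, hinit j, hrow, smul_zero, add_zero]
    · exact absurd rfl hij

theorem lastRowForm_mul {M : Matrix (Fin (r + 1)) (Fin (r + 1)) K} (hM : M.det ≠ 0)
    (ŵ : Matrix (Fin (r + 1)) ι K) :
    lastRowForm S (M * ŵ) = M.det * lastRowForm S ŵ := by
  revert ŵ
  refine diagonal_transvection_induction_of_det_ne_zero
    (fun M => ∀ ŵ, lastRowForm S (M * ŵ) = M.det * lastRowForm S ŵ) M hM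
    (lastRowForm_diagonal_mul S hlin hcov)
    (lastRowForm_transvection_mul S hlin hcov hrow hshift) ?_
  intro A B _ _ ihA ihB ŵ
  rw [Matrix.mul_assoc, ihA, ihB, det_mul, mul_assoc]

end LastRow

theorem LinearMap.apply_single_add_apply_single_eq_zero {R M ι κ : Type*} [CommSemiring R]
    [AddCommMonoid M] [Module R M] [DecidableEq ι] [Fintype κ] [DecidableEq κ]
    (B : (ι → κ → R) →ₗ[R] (ι → κ → R) →ₗ[R] M)
    (hB : ∀ i₁ i₂ j₁ j₂, B (Pi.single i₁ (Pi.single j₁ 1)) (Pi.single i₂ (Pi.single j₂ 1))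
      + B (Pi.single i₂ (Pi.single j₁ 1)) (Pi.single i₁ (Pi.single j₂ 1)) = 0)
    (i₁ i₂ : ι) (v : κ → R) :
    B (Pi.single i₁ v) (Pi.single i₂ v) + B (Pi.single i₂ v) (Pi.single i₁ v) = 0 := by
  have hsingle : ∀ i, (Pi.single i v : ι → κ → R) = ∑ j, v j • Pi.single i (Pi.single j 1) := by
    intro i
    ext a b
    by_cases h : a = i
    · subst h; simp [Finset.sum_apply, Pi.single_apply]
    · simp [Finset.sum_apply, h]
  simp only [hsingle i₁, hsingle i₂, map_sum, map_smul, LinearMap.sum_apply, LinearMap.smul_apply,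
    Finset.smul_sum, ← Finset.sum_add_distrib, ← smul_add, hB, smul_zero, Finset.sum_const_zero]

theorem pdV_eq_lineDeriv {a : ℕ} (f : (Fin a → ℝ) → ℝ) (i : Fin a) (x : Fin a → ℝ) :
    pdV f i x = lineDeriv ℝ f x (Pi.single i 1) := by
  simp only [pdV, lineDeriv]
  congr 1; funext t; congr 1; funext i'
  by_cases h : i' = i <;> simp [h]

theorem pdM_eq_lineDeriv {a b : ℕ} (f : (Fin a → Fin b → ℝ) → ℝ) (i : Fin a) (j : Fin b)
    (m : Fin a → Fin b → ℝ) :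
    pdM f i j m = lineDeriv ℝ f m (Pi.single i (Pi.single j 1)) := by
  simp only [pdM, lineDeriv]
  congr 1; funext t; congr 1; funext i' j'
  by_cases h : i' = i <;> by_cases h' : j' = j <;> simp [h, h']

namespace MixedForm

variable {n k r : ℕ}

abbrev Vars (n k r : ℕ) := (Fin n → ℝ) × (Fin n → Fin k → ℝ) × (Fin r → Fin k → ℝ)

def uncurry₃ (L : (Fin n → ℝ) → (Fin n → Fin k → ℝ) → (Fin r → Fin k → ℝ) → ℝ) :
    Vars n k r → ℝ :=
  fun q => L q.1 q.2.1 q.2.2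

def dirX (A : Fin n) : Vars n k r := (Pi.single A 1, 0, 0)

def dirP (A : Fin n) (v : Fin k → ℝ) : Vars n k r := (0, Pi.single A v, 0)

def dirW (F : Fin r) (v : Fin k → ℝ) : Vars n k r := (0, 0, Pi.single F v)

theorem dirP_add (A : Fin n) (v v' : Fin k → ℝ) :
    dirP (r := r) A (v + v') = dirP A v + dirP A v' := by
  simp [dirP, Pi.single_add]

theorem dirP_smul (A : Fin n) (c : ℝ) (v : Fin k → ℝ) :
    dirP (r := r) A (c • v) = c • dirP A v := by
  simp [dirP, Pi.single_smul]

/-- The fundamental equations are stated in the entries of the stacked matrix `(p; w)`. -/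
def ofStacked : (Fin (n + r) → Fin k → ℝ) →L[ℝ] Vars n k r :=
  (ContinuousLinearMap.inr ℝ _ _).comp
    ((ContinuousLinearMap.pi fun A => ContinuousLinearMap.proj (Fin.castAdd r A)).prod
      (ContinuousLinearMap.pi fun F => ContinuousLinearMap.proj (Fin.natAdd n F)))

theorem ofStacked_apply (m : Fin (n + r) → Fin k → ℝ) :
    ofStacked m = (0, fun A => m (Fin.castAdd r A), fun F => m (Fin.natAdd n F)) := rfl

theorem ofStacked_single_castAdd (A : Fin n) (v : Fin k → ℝ) :
    ofStacked (Pi.single (Fin.castAdd r A) v) = dirP A v := by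
  have hW : (fun F => (Pi.single (Fin.castAdd r A) v : Fin (n + r) → Fin k → ℝ)
      (Fin.natAdd n F)) = 0 :=
    funext fun F => by simp [Pi.single_apply, Fin.ext_iff]; omega
  rw [ofStacked_apply, hW, dirP]
  congr 2
  funext A'
  simp [Pi.single_apply]

theorem ofStacked_single_natAdd (F : Fin r) (v : Fin k → ℝ) :
    ofStacked (n := n) (Pi.single (Fin.natAdd n F) v) = dirW F v := by
  have hP : (fun A => (Pi.single (Fin.natAdd n F) v : Fin (n + r) → Fin k → ℝ)
      (Fin.castAdd r A)) = 0 :=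
    funext fun A => by simp [Pi.single_apply, Fin.ext_iff]; omega
  rw [ofStacked_apply, hP, dirW]
  congr 2
  funext F'
  simp [Pi.single_apply]

/-- `xpTrace L x p w v = Σ_A ∂_{x^A} (Σ_K v^K ∂𝓛/∂p_A^K)(x, p, w)`, so that
`Δ𝓛(x, p, ŵ) = (-1)^r xpTrace L x p w w'`. -/
def xpTrace (L : (Fin n → ℝ) → (Fin n → Fin k → ℝ) → (Fin r → Fin k → ℝ) → ℝ)
    (x : Fin n → ℝ) (p : Fin n → Fin k → ℝ) (w : Fin r → Fin k → ℝ) (v : Fin k → ℝ) : ℝ :=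
  ∑ A, lineDeriv ℝ (fun x' => lineDeriv ℝ (fun p' => L x' p' w) p (Pi.single A v)) x
    (Pi.single A 1)

theorem Dmix_eq_sum_xpTrace
    (L : (Fin n → ℝ) → (Fin n → Fin k → ℝ) → (Fin r → Fin k → ℝ) → ℝ)
    (x : Fin n → ℝ) (p : Fin n → Fin k → ℝ) (ŵ : Fin (r + 1) → Fin k → ℝ) :
    Dmix L x p ŵ = (-1) ^ r * ∑ K, ŵ (Fin.last r) K *
      xpTrace L x p (fun F => ŵ F.castSucc) (Pi.single K 1) := by
  simp only [Dmix, xpTrace, pdV_eq_lineDeriv, pdM_eq_lineDeriv, Finset.mul_sum]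

theorem add_smul_single_eq_add_mmul (p : Fin n → Fin k → ℝ) (w : Fin r → Fin k → ℝ)
    (A : Fin n) (F : Fin r) (t : ℝ) :
    p + t • (Pi.single A (w F) : Fin n → Fin k → ℝ)
      = p + mmul (Pi.single A (Pi.single F t) : Fin n → Fin r → ℝ) w := by
  funext B K
  by_cases hB : B = A
  · subst hB; simp [mmul, Pi.single_apply]
  · simp [mmul, hB]

variable {U : Set (Fin n → ℝ)}
  {L : (Fin n → ℝ) → (Fin n → Fin k → ℝ) → (Fin r → Fin k → ℝ) → ℝ}

theorem xpTrace_mmul (hU : IsOpen U)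
    (hcov : ∀ x ∈ U, ∀ (p : Fin n → Fin k → ℝ) (w : Fin r → Fin k → ℝ) (h : Fin r → Fin r → ℝ),
      fdet h ≠ 0 → L x p (mmul h w) = fdet h * L x p w)
    {x : Fin n → ℝ} (hx : x ∈ U) (p : Fin n → Fin k → ℝ) (w : Fin r → Fin k → ℝ)
    {h : Fin r → Fin r → ℝ} (hh : fdet h ≠ 0) (v : Fin k → ℝ) :
    xpTrace L x p (mmul h w) v = fdet h * xpTrace L x p w v := by
  rw [xpTrace, xpTrace, Finset.mul_sum]
  refine Finset.sum_congr rfl fun A _ => ?_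
  have hev : (fun x' => lineDeriv ℝ (fun p' => L x' p' (mmul h w)) p (Pi.single A v))
      =ᶠ[𝓝 x] fun x' => fdet h * lineDeriv ℝ (fun p' => L x' p' w) p (Pi.single A v) :=
    eventually_of_mem (hU.mem_nhds hx) fun x' hx' => by
      simp only [hcov x' hx' _ w h hh, lineDeriv_const_mul]
  rw [hev.lineDeriv_eq, lineDeriv_const_mul]

theorem xpTrace_row_eq_zero (hU : IsOpen U)
    (hadm : ∀ x ∈ U, ∀ (p : Fin n → Fin k → ℝ) (w : Fin r → Fin k → ℝ) (a : Fin n → Fin r → ℝ),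
      L x (p + mmul a w) w = L x p w)
    {x : Fin n → ℝ} (hx : x ∈ U) (p : Fin n → Fin k → ℝ) (w : Fin r → Fin k → ℝ) (F : Fin r) :
    xpTrace L x p w (w F) = 0 := by
  refine Finset.sum_eq_zero fun A _ => lineDeriv_eq_zero_of_eventuallyEq_zero ?_ _
  refine eventually_of_mem (hU.mem_nhds hx) fun x' hx' => ?_
  simp [lineDeriv, add_smul_single_eq_add_mmul, hadm x' hx']

section Smooth

variable (hU : IsOpen U) (hsm : ContDiffOn ℝ (⊤ : ℕ∞) (uncurry₃ L) (U ×ˢ Set.univ))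

include hU hsm

theorem contDiffAt_uncurry₃ {z : Vars n k r} (hz : z.1 ∈ U) :
    ContDiffAt ℝ (⊤ : ℕ∞) (uncurry₃ L) z :=
  hsm.contDiffAt ((hU.prod isOpen_univ).mem_nhds ⟨hz, trivial⟩)

theorem differentiableAt_fderiv_uncurry₃ {z : Vars n k r} (hz : z.1 ∈ U) :
    DifferentiableAt ℝ (fderiv ℝ (uncurry₃ L)) z :=
  ((contDiffAt_uncurry₃ hU hsm hz).fderiv_right (m := (⊤ : ℕ∞)) (by simp)).differentiableAt
    (by simp)

theorem contDiffAt_fderiv_uncurry₃_apply {z : Vars n k r} (hz : z.1 ∈ U) (u : Vars n k r) :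
    ContDiffAt ℝ (⊤ : ℕ∞) (fun z' => fderiv ℝ (uncurry₃ L) z' u) z :=
  ((contDiffAt_uncurry₃ hU hsm hz).fderiv_right (m := (⊤ : ℕ∞)) (by simp)).clm_apply
    contDiffAt_const

theorem xpTrace_eq_fderiv {x : Fin n → ℝ} (hx : x ∈ U) (p : Fin n → Fin k → ℝ)
    (w : Fin r → Fin k → ℝ) (v : Fin k → ℝ) :
    xpTrace L x p w v =
      ∑ A, fderiv ℝ (fun z => fderiv ℝ (uncurry₃ L) z (dirP A v)) (x, p, w) (dirX A) := by
  refine Finset.sum_congr rfl fun A _ => ?_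
  have hinner : ∀ x' ∈ U, lineDeriv ℝ (fun p' => L x' p' w) p (Pi.single A v)
      = fderiv ℝ (uncurry₃ L) (x', p, w) (dirP A v) := by
    intro x' hx'
    have hd := (contDiffAt_uncurry₃ hU hsm (z := (x', p, w)) hx').differentiableAt (by simp)
    have := lineDeriv_comp_const_add_clm ((x', 0, w) : Vars n k r)
      ((ContinuousLinearMap.inr ℝ _ _).comp (ContinuousLinearMap.inl ℝ _ _))
      (f := uncurry₃ L) (m := p) (by simpa using hd) (Pi.single A v)
    simpa [uncurry₃, dirP] using this
  have hev : (fun x' => lineDeriv ℝ (fun p' => L x' p' w) p (Pi.single A v))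
      =ᶠ[𝓝 x] fun x' => fderiv ℝ (uncurry₃ L) (x', p, w) (dirP A v) :=
    eventually_of_mem (hU.mem_nhds hx) hinner
  rw [hev.lineDeriv_eq]
  have hd := (contDiffAt_fderiv_uncurry₃_apply hU hsm (z := (x, p, w)) hx
    (dirP A v)).differentiableAt (by simp)
  have := lineDeriv_comp_const_add_clm ((0, p, w) : Vars n k r) (ContinuousLinearMap.inl ℝ _ _)
    (f := fun z => fderiv ℝ (uncurry₃ L) z (dirP A v)) (m := x) (by simpa using hd)
    (Pi.single A 1)
  simpa [dirX, Prod.zero_eq_mk] using this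

theorem isLinearMap_xpTrace {x : Fin n → ℝ} (hx : x ∈ U) (p : Fin n → Fin k → ℝ)
    (w : Fin r → Fin k → ℝ) : IsLinearMap ℝ (xpTrace L x p w) := by
  have hD2 : ∀ v, xpTrace L x p w v =
      ∑ A, fderiv ℝ (fderiv ℝ (uncurry₃ L)) (x, p, w) (dirX A) (dirP A v) := fun v => by
    simp only [xpTrace_eq_fderiv hU hsm hx,
      fderiv_fderiv_apply (differentiableAt_fderiv_uncurry₃ hU hsm (z := (x, p, w)) hx)]
  constructor
  · intro v v'
    simp only [hD2, dirP_add, map_add, Finset.sum_add_distrib]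
  · intro c v
    simp only [hD2, dirP_smul, map_smul, smul_eq_mul, Finset.mul_sum]

theorem Dmix_eq_lastRowForm {x : Fin n → ℝ} (hx : x ∈ U) (p : Fin n → Fin k → ℝ)
    (ŵ : Fin (r + 1) → Fin k → ℝ) :
    Dmix L x p ŵ = (-1) ^ r * lastRowForm (xpTrace L x p) ŵ := by
  have h := congrArg ((isLinearMap_xpTrace hU hsm hx p fun F => ŵ F.castSucc).mk' _)
    (pi_eq_sum_univ' (ŵ (Fin.last r)))
  simp only [IsLinearMap.mk'_apply, map_sum, map_smul, smul_eq_mul] at h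
  rw [Dmix_eq_sum_xpTrace]
  exact congrArg _ h.symm

theorem pdM_pdM_stacked_eq_fderiv_fderiv {x : Fin n → ℝ} (hx : x ∈ U) (i₁ i₂ : Fin (n + r))
    (j₁ j₂ : Fin k) (m : Fin (n + r) → Fin k → ℝ) :
    pdM (fun m' => pdM (fun m'' => L x (fun A => m'' (Fin.castAdd r A))
        (fun F => m'' (Fin.natAdd n F))) i₂ j₂ m') i₁ j₁ m
      = fderiv ℝ (fderiv ℝ (uncurry₃ L)) ((x, 0, 0) + ofStacked m)
          (ofStacked (Pi.single i₁ (Pi.single j₁ 1)))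
          (ofStacked (Pi.single i₂ (Pi.single j₂ 1))) := by
  set c : Vars n k r := (x, 0, 0)
  have hc : ∀ m', (c + ofStacked m').1 ∈ U := fun m' => by simpa [c, ofStacked_apply] using hx
  have hΛ : (fun m'' => L x (fun A => m'' (Fin.castAdd r A)) (fun F => m'' (Fin.natAdd n F)))
      = fun m'' => uncurry₃ L (c + ofStacked m'') := by
    funext m''
    simp [c, uncurry₃, ofStacked_apply]
  have hinner : ∀ m', pdM (fun m'' => uncurry₃ L (c + ofStacked m'')) i₂ j₂ m'
      = fderiv ℝ (uncurry₃ L) (c + ofStacked m') (ofStacked (Pi.single i₂ (Pi.single j₂ 1))) :=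
    fun m' => by
      rw [pdM_eq_lineDeriv, lineDeriv_comp_const_add_clm c ofStacked
        ((contDiffAt_uncurry₃ hU hsm (hc m')).differentiableAt (by simp))]
  rw [hΛ]
  simp only [hinner]
  rw [pdM_eq_lineDeriv, lineDeriv_comp_const_add_clm c ofStacked
    ((contDiffAt_fderiv_uncurry₃_apply hU hsm (hc m) _).differentiableAt (by simp)),
    fderiv_fderiv_apply (differentiableAt_fderiv_uncurry₃ hU hsm (hc m))]

theorem fderiv_fderiv_dirW_dirP_eq_zero
    (hfund : ∀ x ∈ U, FundEqs (fun m : Fin (n + r) → Fin k → ℝ =>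
      L x (fun A => m (Fin.castAdd r A)) (fun F => m (Fin.natAdd n F))))
    {z : Vars n k r} (hz : z.1 ∈ U) (A : Fin n) (F : Fin r) (v : Fin k → ℝ) :
    fderiv ℝ (fderiv ℝ (uncurry₃ L)) z (dirW F v) (dirP A v) = 0 := by
  obtain ⟨x, p, w⟩ := z
  have hstacked : ((x, 0, 0) : Vars n k r) + ofStacked (Fin.append p w) = (x, p, w) := by
    simp [ofStacked_apply]
  set B := (fderiv ℝ (fderiv ℝ (uncurry₃ L)) (x, p, w)).bilinearComp ofStacked ofStacked
  have hcoord : ∀ i₁ i₂ j₁ j₂,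
      B.toLinearMap₁₂ (Pi.single i₁ (Pi.single j₁ 1)) (Pi.single i₂ (Pi.single j₂ 1))
        + B.toLinearMap₁₂ (Pi.single i₂ (Pi.single j₁ 1)) (Pi.single i₁ (Pi.single j₂ 1))
        = 0 := by
    intro i₁ i₂ j₁ j₂
    have h := hfund x hz i₁ i₂ j₁ j₂ (Fin.append p w)
    rwa [pdM_pdM_stacked_eq_fderiv_fderiv hU hsm hz,
      pdM_pdM_stacked_eq_fderiv_fderiv hU hsm hz, hstacked] at h
  have hpol := LinearMap.apply_single_add_apply_single_eq_zero _ hcoord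
    (Fin.castAdd r A) (Fin.natAdd n F) v
  simp only [B, ContinuousLinearMap.toLinearMap₁₂_apply_apply_apply,
    ContinuousLinearMap.bilinearComp_apply, ofStacked_single_castAdd,
    ofStacked_single_natAdd] at hpol
  have hsymm := (contDiffAt_uncurry₃ hU hsm (z := (x, p, w)) hz).isSymmSndFDerivAt
    (by simp; exact WithTop.coe_le_coe.2 le_top) (dirP A v) (dirW F v)
  linarith

theorem xpTrace_update
    (hfund : ∀ x ∈ U, FundEqs (fun m : Fin (n + r) → Fin k → ℝ =>
      L x (fun A => m (Fin.castAdd r A)) (fun F => m (Fin.natAdd n F))))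
    {x : Fin n → ℝ} (hx : x ∈ U) (p : Fin n → Fin k → ℝ) (w : Fin r → Fin k → ℝ) (F : Fin r)
    (v : Fin k → ℝ) (c : ℝ) :
    xpTrace L x p (Function.update w F (w F + c • v)) v = xpTrace L x p w v := by
  have hline : ((x, p, Function.update w F (w F + c • v)) : Vars n k r)
      = (x, p, w) + c • dirW F v := by
    simp only [dirW, Prod.smul_mk, Prod.mk_add_mk, smul_zero, add_zero, Prod.mk.injEq, true_and]
    funext G K
    by_cases hG : G = F
    · subst hG; simp
    · simp [hG]
  have hU' : ∀ t : ℝ, ((x, p, w) + t • dirW F v : Vars n k r).1 ∈ U := fun t => by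
    simpa [dirW] using hx
  rw [xpTrace_eq_fderiv hU hsm hx, xpTrace_eq_fderiv hU hsm hx, hline]
  refine Finset.sum_congr rfl fun A _ => apply_add_smul_eq_of_fderiv_apply_eq_zero
    (f := fun z => fderiv ℝ (fun z' => fderiv ℝ (uncurry₃ L) z' (dirP A v)) z (dirX A))
    (fun t => ?_) (fun t => ?_) c
  · exact (((contDiffAt_fderiv_uncurry₃_apply hU hsm (hU' t) _).fderiv_right
      (m := (⊤ : ℕ∞)) (by simp)).clm_apply contDiffAt_const).differentiableAt (by simp)
  · refine fderiv_fderiv_apply_eq_zero_of_eventually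
      ((contDiffAt_fderiv_uncurry₃_apply hU hsm (hU' t) _).of_le
        (WithTop.coe_le_coe.2 le_top)) ?_ _
    filter_upwards [(hU.preimage continuous_fst).mem_nhds (hU' t)] with z hz
    rw [fderiv_fderiv_apply (differentiableAt_fderiv_uncurry₃ hU hsm hz)]
    exact fderiv_fderiv_dirW_dirP_eq_zero hU hsm hfund hz A F v

end Smooth

end MixedForm

open MixedForm in
/-- The differential `Δ𝓛` of an even mixed form `𝓛` of codegree
`k` and additional degree `r` on `U` is left-covariant:
`Δ𝓛(x, p, ĥ·ŵ) = det ĥ · Δ𝓛(x, p, ŵ)` for all invertible `ĥ ∈ GL(r+1)`. -/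
theorem statement_13 (n k r : ℕ) (U : Set (Fin n → ℝ)) (hU : IsOpen U)
    (L : (Fin n → ℝ) → (Fin n → Fin k → ℝ) → (Fin r → Fin k → ℝ) → ℝ)
    (hL : IsMixedForm U L) :
    ∀ x ∈ U, ∀ (p : Fin n → Fin k → ℝ) (what : Fin (r + 1) → Fin k → ℝ)
        (hhat : Fin (r + 1) → Fin (r + 1) → ℝ), fdet hhat ≠ 0 →
      Dmix L x p (mmul hhat what) = fdet hhat * Dmix L x p what := by
  obtain ⟨hsm, -, hcov, hadm, hfund⟩ := hL
  intro x hx p what hhat hdet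
  have key := lastRowForm_mul (xpTrace L x p) (isLinearMap_xpTrace hU hsm hx p)
    (fun h w v hh => xpTrace_mmul hU hcov hx p w hh v) (xpTrace_row_eq_zero hU hadm hx p)
    (xpTrace_update hU hsm hfund hx p) (M := Matrix.of hhat) hdet what
  rw [Dmix_eq_lastRowForm hU hsm hx, Dmix_eq_lastRowForm hU hsm hx, mul_left_comm]
  exact congrArg _ key
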